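/- Let G = (V,E) be a finite graph, q ≥ 1 an integer, β ≥ 0, and let P_G be the transition matrix of the Swendsen–Wang dynamics for the q-state Potts model on G at inverse temperature β. Then for all σ, τ ∈ Ω_P, every vertex v ∈ V and all colors k, l ∈ {1,…,q}: P_G(σ^{v,k}, τ^{v,l}) ≤ (q e^{2β} − (q−1) e^{β})^{deg_G(v)} · P_G(σ,τ), where deg_G(v) is the degree of v in G. -/

import Mathlib

/-!
Split a set `A ⊆ E(σ^{v,k}) ∩ E(τ^{v,l})` of open edges as `B ∪ S`, where `S ⊆ δ(v)` consists
of the edges of `A` at `v`, so that `B ⊆ E(σ) ∩ E(τ)`. Adding the `|S|` edges of `S` to `B`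
lowers the number of components by at most `|S|`, and `|E(σ)| ≤ |E(σ^{v,k})| + deg v`; hence
the weight of `A` is at most `(q (e^β - 1))^{|S|} e^{β deg v}` times the weight of `B` in
`P_G(σ, τ)`. Summing over `S ⊆ δ(v)` produces the factor
`((q (e^β - 1) + 1) e^β)^{deg v} = (q e^{2β} - (q - 1) e^β)^{deg v}`.
-/

open Finset

noncomputable section

/-- `ξ` is an eigenvalue of the kernel `P` on the finite state space `Ω`. -/
def IsEigenvalue {Ω : Type*} [Fintype Ω] (P : Ω → Ω → ℝ) (ξ : ℝ) : Prop :=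
  ∃ f : Ω → ℝ, f ≠ 0 ∧ ∀ x, (∑ y, P x y * f y) = ξ * f x

/-- The (absolute) spectral gap: `1` minus the largest absolute value of an
eigenvalue different from `1`. -/
def spectralGap {Ω : Type*} [Fintype Ω] (P : Ω → Ω → ℝ) : ℝ :=
  1 - sSup {r : ℝ | ∃ ξ : ℝ, IsEigenvalue P ξ ∧ ξ ≠ 1 ∧ r = |ξ|}

variable {V E : Type*}

/-- The graph on the vertex set `V` induced by the edges in `A` (a multigraph
`(V, E)` is described by the map `ends` sending an edge to its two endpoints). -/
def subGraph (ends : E → V × V) (A : Finset E) : SimpleGraph V :=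
  SimpleGraph.fromRel fun a b => ∃ e ∈ A, ends e = (a, b) ∨ ends e = (b, a)

/-- `c(A)`: the number of connected components of the spanning subgraph `(V, A)`. -/
def compCount (ends : E → V × V) (A : Finset E) : ℕ :=
  Nat.card (subGraph ends A).ConnectedComponent

/-- The endpoints of the edge `e` are connected in the spanning subgraph `(V, A)`. -/
def connectedIn (ends : E → V × V) (A : Finset E) (e : E) : Prop :=
  (subGraph ends A).Reachable (ends e).1 (ends e).2

/-- The degree of the vertex `v` in the multigraph `(V, E)`. -/
def degree [Fintype E] [DecidableEq V] (ends : E → V × V) (v : V) : ℕ :=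
  (univ.filter fun e => (ends e).1 = v ∨ (ends e).2 = v).card

/-- `E(σ)`: the set of edges whose endpoints receive the same color in `σ`. -/
def agreeSet [Fintype E] {q : ℕ} (ends : E → V × V) (σ : V → Fin q) : Finset E :=
  univ.filter fun e => σ (ends e).1 = σ (ends e).2

/-- Unnormalized Potts weight `e^{β |E(σ)|}`. -/
def pottsWeight [Fintype E] (ends : E → V × V) (q : ℕ) (β : ℝ) (σ : V → Fin q) : ℝ :=
  Real.exp (β * (agreeSet ends σ).card)

/-- The `q`-state Potts measure on `G` at inverse temperature `β`. -/
def pottsPi [Fintype V] [DecidableEq V] [Fintype E] (ends : E → V × V) (q : ℕ) (β : ℝ)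
    (σ : V → Fin q) : ℝ :=
  pottsWeight ends q β σ / ∑ τ : V → Fin q, pottsWeight ends q β τ

/-- Transition matrix of the heat-bath (Glauber) dynamics for the Potts model. -/
def PHB [Fintype V] [DecidableEq V] [Fintype E] (ends : E → V × V) (q : ℕ) (β : ℝ)
    (σ τ : V → Fin q) : ℝ :=
  (Fintype.card V : ℝ)⁻¹ * ∑ v : V,
    (pottsPi ends q β τ / ∑ l : Fin q, pottsPi ends q β (Function.update σ v l)) *
      (if ∃ k : Fin q, τ = Function.update σ v k then 1 else 0)

/-- Transition matrix of the Swendsen–Wang dynamics for the Potts model,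
with `p = 1 - e^{-β}`. -/
def PSW [Fintype V] [Fintype E] [DecidableEq E] (ends : E → V × V) (q : ℕ) (β : ℝ)
    (σ τ : V → Fin q) : ℝ :=
  ∑ A ∈ (agreeSet ends σ ∩ agreeSet ends τ).powerset,
    (1 - Real.exp (-β)) ^ A.card * (Real.exp (-β)) ^ ((agreeSet ends σ).card - A.card) *
      ((q : ℝ) ^ compCount ends A)⁻¹

namespace SimpleGraph

theorem reachable_sup_edge {G : SimpleGraph V} {u w x y : V}
    (h : (G ⊔ edge u w).Reachable x y) :
    G.Reachable x y ∨ (G.Reachable x u ∧ G.Reachable w y) ∨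
      (G.Reachable x w ∧ G.Reachable u y) := by
  obtain ⟨p⟩ := h
  induction p with
  | nil => exact Or.inl .rfl
  | @cons a b c hab _ ih =>
    rw [sup_adj, edge_adj] at hab
    rcases hab with hG | ⟨hab | hab, -⟩
    · have hr := hG.reachable
      rcases ih with h | ⟨h₁, h₂⟩ | ⟨h₁, h₂⟩
      · exact Or.inl (hr.trans h)
      · exact Or.inr (Or.inl ⟨hr.trans h₁, h₂⟩)
      · exact Or.inr (Or.inr ⟨hr.trans h₁, h₂⟩)
    · obtain ⟨rfl, rfl⟩ := hab
      rcases ih with h | ⟨h₁, h₂⟩ | ⟨h₁, h₂⟩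
      · exact Or.inr (Or.inl ⟨.rfl, h⟩)
      · exact Or.inr (Or.inl ⟨.rfl, h₂⟩)
      · exact Or.inl h₂
    · obtain ⟨rfl, rfl⟩ := hab
      rcases ih with h | ⟨h₁, h₂⟩ | ⟨h₁, h₂⟩
      · exact Or.inr (Or.inr ⟨.rfl, h⟩)
      · exact Or.inl h₂
      · exact Or.inr (Or.inr ⟨.rfl, h₂⟩)

theorem card_connectedComponent_le_card_sup_edge_add_one [Finite V] (G : SimpleGraph V)
    (u w : V) :
    Nat.card G.ConnectedComponent ≤ Nat.card (G ⊔ edge u w).ConnectedComponent + 1 := by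
  classical
  let f (c : G.ConnectedComponent) : Option (G ⊔ edge u w).ConnectedComponent :=
    if c = G.connectedComponentMk w then none else some (c.map (Hom.ofLE le_sup_left))
  have hf : Function.Injective f := by
    intro c₁ c₂ h
    induction c₁ using ConnectedComponent.ind with | h x => ?_
    induction c₂ using ConnectedComponent.ind with | h y => ?_
    by_cases hx : G.connectedComponentMk x = G.connectedComponentMk w <;>
      by_cases hy : G.connectedComponentMk y = G.connectedComponentMk w <;>
      simp only [f, hx, hy, if_true, if_false, reduceCtorEq, Option.some.injEq,
        ConnectedComponent.map_mk, ConnectedComponent.eq] at h ⊢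
    rw [ConnectedComponent.eq] at hx hy
    rcases reachable_sup_edge h with h | ⟨-, h⟩ | ⟨h, -⟩
    · exact h
    · exact absurd h.symm hy
    · exact absurd h hx
  simpa using Nat.card_le_card_of_injective f hf

end SimpleGraph

theorem Finset.sum_powerset_union_of_disjoint {α M : Type*} [DecidableEq α] [AddCommMonoid M]
    {s t : Finset α} (h : Disjoint s t) (f : Finset α → M) :
    ∑ A ∈ (s ∪ t).powerset, f A = ∑ B ∈ s.powerset, ∑ C ∈ t.powerset, f (B ∪ C) := by
  rw [← sum_product']
  refine (sum_nbij' (fun p => p.1 ∪ p.2) (fun A => (A ∩ s, A ∩ t)) ?_ ?_ ?_ ?_ ?_).symm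
  · intro p hp
    simp only [mem_product, mem_powerset] at hp ⊢
    exact union_subset_union hp.1 hp.2
  · intro A hA
    simp only [mem_product, mem_powerset]
    exact ⟨inter_subset_right, inter_subset_right⟩
  · rintro ⟨B, C⟩ hp
    simp only [mem_product, mem_powerset] at hp
    simp only [union_inter_distrib_right, Prod.mk.injEq]
    constructor
    · rw [inter_eq_left.mpr hp.1, disjoint_iff_inter_eq_empty.mp (h.symm.mono_left hp.2),
        union_empty]
    · rw [inter_eq_left.mpr hp.2, disjoint_iff_inter_eq_empty.mp (h.mono_left hp.1),
        empty_union]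
  · intro A hA
    rw [← inter_union_distrib_left, inter_eq_left.mpr (mem_powerset.mp hA)]
  · intro _ _
    rfl

lemma subGraph_insert_le [DecidableEq E] (ends : E → V × V) (A : Finset E) (e : E) :
    subGraph ends (insert e A) ≤ subGraph ends A ⊔ SimpleGraph.edge (ends e).1 (ends e).2 := by
  intro x y hxy
  rw [subGraph, SimpleGraph.fromRel_adj] at hxy
  obtain ⟨hne, hrel⟩ := hxy
  obtain ⟨e', he', hends⟩ : ∃ e' ∈ insert e A, ends e' = (x, y) ∨ ends e' = (y, x) := by
    rcases hrel with ⟨e', he', h⟩ | ⟨e', he', h⟩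
    exacts [⟨e', he', h⟩, ⟨e', he', h.symm⟩]
  rcases Finset.mem_insert.mp he' with rfl | he'
  · right
    rw [SimpleGraph.edge_adj]
    rcases hends with h | h <;> simp [h, hne]
  · left
    rw [subGraph, SimpleGraph.fromRel_adj]
    exact ⟨hne, Or.inl ⟨e', he', hends⟩⟩

lemma compCount_le_compCount_insert_add_one [Finite V] [DecidableEq E] (ends : E → V × V)
    (A : Finset E) (e : E) : compCount ends A ≤ compCount ends (insert e A) + 1 :=
  ((subGraph ends A).card_connectedComponent_le_card_sup_edge_add_one _ _).trans
    (Nat.add_le_add_right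
      (SimpleGraph.ConnectedComponent.card_le_card_of_le (subGraph_insert_le ends A e)) 1)

lemma compCount_le_compCount_union_add_card [Finite V] [DecidableEq E] (ends : E → V × V)
    (A S : Finset E) : compCount ends A ≤ compCount ends (A ∪ S) + S.card := by
  induction S using Finset.induction with
  | empty => simp
  | @insert e S he ih =>
    have := compCount_le_compCount_insert_add_one ends (A ∪ S) e
    rw [union_insert, card_insert_of_notMem he]
    omega

def incidentEdges [Fintype E] [DecidableEq V] (ends : E → V × V) (v : V) : Finset E :=
  univ.filter fun e => (ends e).1 = v ∨ (ends e).2 = v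

lemma degree_eq_card_incidentEdges [Fintype E] [DecidableEq V] (ends : E → V × V) (v : V) :
    degree ends v = (incidentEdges ends v).card :=
  rfl

lemma agreeSet_update_sdiff_incidentEdges [Fintype E] [DecidableEq V] [DecidableEq E] {q : ℕ}
    (ends : E → V × V) (ρ : V → Fin q) (v : V) (m : Fin q) :
    agreeSet ends (Function.update ρ v m) \ incidentEdges ends v =
      agreeSet ends ρ \ incidentEdges ends v := by
  ext e
  simp only [agreeSet, incidentEdges, mem_sdiff, mem_filter, mem_univ, true_and, not_or]
  refine and_congr_left fun ⟨h₁, h₂⟩ => ?_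
  rw [Function.update_of_ne h₁, Function.update_of_ne h₂]

lemma card_agreeSet_le_card_agreeSet_update_add [Fintype E] [DecidableEq V] [DecidableEq E]
    {q : ℕ} (ends : E → V × V) (ρ : V → Fin q) (v : V) (m : Fin q) :
    (agreeSet ends ρ).card ≤
      (agreeSet ends (Function.update ρ v m)).card + (incidentEdges ends v).card := by
  calc (agreeSet ends ρ).card
      ≤ (agreeSet ends ρ \ incidentEdges ends v ∪ incidentEdges ends v).card :=
        card_le_card (by simp)
    _ ≤ (agreeSet ends (Function.update ρ v m) ∪ incidentEdges ends v).card := by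
        rw [← agreeSet_update_sdiff_incidentEdges ends ρ v m]
        exact card_le_card (union_subset_union sdiff_subset le_rfl)
    _ ≤ _ := card_union_le _ _

lemma inter_agreeSet_update_sdiff_subset [Fintype E] [DecidableEq V] [DecidableEq E] {q : ℕ}
    (ends : E → V × V) (σ τ : V → Fin q) (v : V) (k l : Fin q) :
    (agreeSet ends (Function.update σ v k) ∩ agreeSet ends (Function.update τ v l)) \
        incidentEdges ends v ⊆ agreeSet ends σ ∩ agreeSet ends τ := by
  calc _ = (agreeSet ends (Function.update σ v k) \ incidentEdges ends v) ∩
          (agreeSet ends (Function.update τ v l) \ incidentEdges ends v) := inf_sdiff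
    _ = (agreeSet ends σ \ incidentEdges ends v) ∩ (agreeSet ends τ \ incidentEdges ends v) := by
        rw [agreeSet_update_sdiff_incidentEdges, agreeSet_update_sdiff_incidentEdges]
    _ ⊆ _ := inter_subset_inter sdiff_subset sdiff_subset

def swWeight (ends : E → V × V) (q : ℕ) (β : ℝ) (n : ℕ) (A : Finset E) : ℝ :=
  (1 - Real.exp (-β)) ^ A.card * Real.exp (-β) ^ (n - A.card) * ((q : ℝ) ^ compCount ends A)⁻¹

lemma PSW_eq_sum_swWeight [Fintype V] [Fintype E] [DecidableEq E] (ends : E → V × V) (q : ℕ)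
    (β : ℝ) (σ τ : V → Fin q) :
    PSW ends q β σ τ = ∑ A ∈ (agreeSet ends σ ∩ agreeSet ends τ).powerset,
      swWeight ends q β (agreeSet ends σ).card A :=
  rfl

lemma one_sub_exp_neg_nonneg {β : ℝ} (hβ : 0 ≤ β) : 0 ≤ 1 - Real.exp (-β) :=
  sub_nonneg.mpr (Real.exp_le_one_iff.mpr (neg_nonpos.mpr hβ))

lemma swWeight_nonneg (ends : E → V × V) (q : ℕ) {β : ℝ} (hβ : 0 ≤ β) (n : ℕ)
    (A : Finset E) : 0 ≤ swWeight ends q β n A := by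
  have := one_sub_exp_neg_nonneg hβ
  unfold swWeight
  positivity

lemma inv_pow_compCount_union_le [Finite V] [DecidableEq E] (ends : E → V × V) {q : ℕ}
    (hq : 1 ≤ q) (B S : Finset E) :
    ((q : ℝ) ^ compCount ends (B ∪ S))⁻¹ ≤ (q : ℝ) ^ S.card * ((q : ℝ) ^ compCount ends B)⁻¹ := by
  have hq' : (1 : ℝ) ≤ q := by exact_mod_cast hq
  rw [← div_eq_mul_inv, le_div_iff₀ (by positivity), inv_mul_le_iff₀ (by positivity),
    ← pow_add]
  exact pow_le_pow_right₀ hq' (compCount_le_compCount_union_add_card ends B S)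

lemma exp_neg_pow_sub_le {β : ℝ} (hβ : 0 ≤ β) {b s n n' d : ℕ} (hb : b ≤ n) (hbs : b + s ≤ n')
    (hn : n ≤ n' + d) :
    Real.exp (-β) ^ (n' - (b + s)) ≤
      Real.exp β ^ s * Real.exp β ^ d * Real.exp (-β) ^ (n - b) := by
  simp only [← Real.exp_nat_mul, ← Real.exp_add, Real.exp_le_exp]
  rw [Nat.cast_sub hbs, Nat.cast_sub hb]
  have : (n : ℝ) ≤ n' + d := by exact_mod_cast hn
  push_cast
  nlinarith

lemma swWeight_union_le [Finite V] [DecidableEq E] (ends : E → V × V) {q : ℕ} (hq : 1 ≤ q)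
    {β : ℝ} (hβ : 0 ≤ β) {B S : Finset E} (hBS : Disjoint B S) {n n' d : ℕ}
    (hB : B.card ≤ n) (hBS' : B.card + S.card ≤ n') (hn : n ≤ n' + d) :
    swWeight ends q β n' (B ∪ S) ≤
      ((q : ℝ) * (Real.exp β - 1)) ^ S.card * Real.exp β ^ d * swWeight ends q β n B := by
  have := one_sub_exp_neg_nonneg hβ
  have hx : (q : ℝ) * (Real.exp β - 1) = (1 - Real.exp (-β)) * Real.exp β * q := by
    rw [Real.exp_neg]; field_simp
  calc swWeight ends q β n' (B ∪ S)
      = (1 - Real.exp (-β)) ^ B.card * (1 - Real.exp (-β)) ^ S.card *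
          (Real.exp (-β) ^ (n' - (B.card + S.card)) *
            ((q : ℝ) ^ compCount ends (B ∪ S))⁻¹) := by
        rw [swWeight, card_union_of_disjoint hBS, pow_add]; ring
    _ ≤ (1 - Real.exp (-β)) ^ B.card * (1 - Real.exp (-β)) ^ S.card *
          ((Real.exp β ^ S.card * Real.exp β ^ d * Real.exp (-β) ^ (n - B.card)) *
            ((q : ℝ) ^ S.card * ((q : ℝ) ^ compCount ends B)⁻¹)) := by
        gcongr
        · exact exp_neg_pow_sub_le hβ hB hBS' hn
        · exact inv_pow_compCount_union_le ends hq B S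
    _ = _ := by rw [hx, swWeight, mul_pow, mul_pow]; ring

lemma sum_powerset_swWeight_le [Finite V] [DecidableEq E] (ends : E → V × V) {q : ℕ}
    (hq : 1 ≤ q) {β : ℝ} (hβ : 0 ≤ β) {I I' D : Finset E} {n n' : ℕ} (hI : I.card ≤ n)
    (hI' : I'.card ≤ n') (hn : n ≤ n' + D.card) (hsub : I' \ D ⊆ I) :
    ∑ A ∈ I'.powerset, swWeight ends q β n' A ≤
      (((q : ℝ) * (Real.exp β - 1) + 1) * Real.exp β) ^ D.card *
        ∑ A ∈ I.powerset, swWeight ends q β n A := by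
  set x : ℝ := q * (Real.exp β - 1)
  have hx : 0 ≤ x := mul_nonneg (Nat.cast_nonneg q) (by linarith [Real.one_le_exp hβ])
  have hterm (B) (hB : B ∈ (I' \ D).powerset) (S) (hS : S ∈ (I' ∩ D).powerset) :
      swWeight ends q β n' (B ∪ S) ≤
        x ^ S.card * Real.exp β ^ D.card * swWeight ends q β n B := by
    rw [mem_powerset] at hB hS
    have hdisj : Disjoint B S := (disjoint_sdiff_inter I' D).mono hB hS
    refine swWeight_union_le ends hq hβ hdisj ((card_le_card (hB.trans hsub)).trans hI) ?_ hn
    rw [← card_union_of_disjoint hdisj]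
    exact (card_le_card (union_subset (hB.trans sdiff_subset) (hS.trans inter_subset_left))).trans
      hI'
  have hgeom : ∑ S ∈ D.powerset, x ^ S.card = (x + 1) ^ D.card := by
    simpa using sum_pow_mul_eq_add_pow x 1 D
  calc ∑ A ∈ I'.powerset, swWeight ends q β n' A
      = ∑ B ∈ (I' \ D).powerset, ∑ S ∈ (I' ∩ D).powerset, swWeight ends q β n' (B ∪ S) := by
        rw [← sum_powerset_union_of_disjoint (disjoint_sdiff_inter I' D), sdiff_union_inter]
    _ ≤ ∑ B ∈ (I' \ D).powerset, ∑ S ∈ D.powerset,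
          x ^ S.card * Real.exp β ^ D.card * swWeight ends q β n B := by
        gcongr with B hB
        refine (sum_le_sum (hterm B hB)).trans ?_
        refine sum_le_sum_of_subset_of_nonneg (powerset_mono.mpr inter_subset_right) ?_
        intros
        have := swWeight_nonneg ends q hβ n B
        positivity
    _ = ((x + 1) * Real.exp β) ^ D.card * ∑ B ∈ (I' \ D).powerset, swWeight ends q β n B := by
        rw [mul_sum]
        refine sum_congr rfl fun B _ => ?_
        rw [← sum_mul, ← sum_mul, hgeom, mul_pow]
    _ ≤ ((x + 1) * Real.exp β) ^ D.card * ∑ B ∈ I.powerset, swWeight ends q β n B := by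
        refine mul_le_mul_of_nonneg_left ?_ (pow_nonneg (by positivity) _)
        refine sum_le_sum_of_subset_of_nonneg (powerset_mono.mpr hsub) ?_
        intros
        exact swWeight_nonneg ends q hβ n _

/-- Changing the color of a single vertex `v` in both arguments
changes the Swendsen–Wang transition probability by at most a factor
`(q e^{2β} − (q−1)e^β)^{deg_G(v)}`. -/
theorem sw_single_site_change
    {V E : Type*} [Fintype V] [DecidableEq V] [Fintype E] [DecidableEq E]
    (ends : E → V × V) (q : ℕ) (hq : 1 ≤ q) (β : ℝ) (hβ : 0 ≤ β)
    (σ τ : V → Fin q) (v : V) (k l : Fin q) :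
    PSW ends q β (Function.update σ v k) (Function.update τ v l) ≤
      ((q : ℝ) * Real.exp (2 * β) - ((q : ℝ) - 1) * Real.exp β) ^ (degree ends v) *
        PSW ends q β σ τ := by
  have hconst : (q : ℝ) * Real.exp (2 * β) - ((q : ℝ) - 1) * Real.exp β =
      ((q : ℝ) * (Real.exp β - 1) + 1) * Real.exp β := by
    rw [two_mul, Real.exp_add]; ring
  rw [PSW_eq_sum_swWeight, PSW_eq_sum_swWeight, hconst, degree_eq_card_incidentEdges]
  exact sum_powerset_swWeight_le ends hq hβ (card_le_card inter_subset_left)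
    (card_le_card inter_subset_left) (card_agreeSet_le_card_agreeSet_update_add ends σ v k)
    (inter_agreeSet_update_sdiff_subset ends σ τ v k l)
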